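/- arXiv:2405.17982 — 2 statements merged into one kernel-verified Lean document; each statement's English description precedes it below -/
import Mathlib

section
/- Let ρ be a ray in ℝⁿ (n ≥ 1) and 0 < ε < 1. Then there exist Boolean tropical Laurent polynomial functions f, g on ℝⁿ such that f and g disagree at some point of ρ, but f and g agree on all of ℝⁿ \ U(ρ,ε), where U(ρ,ε) is the open angular ε-neighborhood of ρ. -/
/-- A Boolean tropical Laurent polynomial function on ℝⁿ. -/
def IsTropFn (n : ℕ) (f : (Fin n → ℝ) → ℝ) : Prop :=
  ∃ (s : Finset (Fin n → ℤ)) (hs : s.Nonempty),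
    ∀ x : Fin n → ℝ, f x = s.sup' hs fun u => ∑ i, (u i : ℝ) * x i

/-- The standard inner product on ℝⁿ. -/
def dot {n : ℕ} (x y : Fin n → ℝ) : ℝ := ∑ i, x i * y i

/-- The Euclidean norm on ℝⁿ. -/
noncomputable def nrm {n : ℕ} (x : Fin n → ℝ) : ℝ := Real.sqrt (dot x x)

section Aux

variable {n : ℕ}

lemma dot_self_nonneg (x : Fin n → ℝ) : 0 ≤ dot x x :=
  Finset.sum_nonneg fun i _ => mul_self_nonneg _

lemma nrm_nonneg (x : Fin n → ℝ) : 0 ≤ nrm x := Real.sqrt_nonneg _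

lemma dot_self_eq (x : Fin n → ℝ) : dot x x = nrm x ^ 2 :=
  (Real.sq_sqrt (dot_self_nonneg x)).symm

lemma nrm_pos {x : Fin n → ℝ} (hx : x ≠ 0) : 0 < nrm x := by
  have h : ∃ i, x i ≠ 0 := by
    by_contra h
    push_neg at h
    exact hx (funext h)
  obtain ⟨i, hi⟩ := h
  have h1 : x i * x i ≤ dot x x :=
    Finset.single_le_sum (f := fun j => x j * x j) (fun j _ => mul_self_nonneg _)
      (Finset.mem_univ i)
  have h2 : 0 < x i * x i := mul_self_pos.2 hi
  exact Real.sqrt_pos.2 (lt_of_lt_of_le h2 h1)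

lemma dot_le_nrm_mul_nrm (x y : Fin n → ℝ) : dot x y ≤ nrm x * nrm y := by
  have h := Real.sum_mul_le_sqrt_mul_sqrt Finset.univ x y
  simpa [dot, nrm, pow_two] using h

lemma abs_dot_le (x y : Fin n → ℝ) : |dot x y| ≤ nrm x * nrm y := by
  rcases abs_cases (dot x y) with ⟨h, -⟩ | ⟨h, -⟩
  · rw [h]; exact dot_le_nrm_mul_nrm x y
  · rw [h]
    have h1 : dot (fun j => -x j) y = -dot x y := by
      simp [dot, Finset.sum_neg_distrib]
    have h2 : nrm (fun j => -x j) = nrm x := by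
      simp [nrm, dot, neg_mul_neg]
    have := dot_le_nrm_mul_nrm (fun j => -x j) y
    rw [h1, h2] at this
    exact this

lemma nrm_le_of_abs_le {x : Fin n → ℝ} {c : ℝ} (hc : 0 ≤ c) (h : ∀ i, |x i| ≤ c) :
    nrm x ≤ Real.sqrt n * c := by
  have h1 : dot x x ≤ (n : ℝ) * (c * c) := by
    have : ∀ j ∈ Finset.univ, x j * x j ≤ c * c := by
      intro j _
      calc x j * x j = |x j| * |x j| := (abs_mul_abs_self _).symm
        _ ≤ c * c := mul_le_mul (h j) (h j) (abs_nonneg _) hc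
    calc dot x x ≤ ∑ _j : Fin n, (c * c) := Finset.sum_le_sum this
      _ = (n : ℝ) * (c * c) := by simp [mul_comm]
  calc nrm x ≤ Real.sqrt ((n : ℝ) * (c * c)) := Real.sqrt_le_sqrt h1
    _ = Real.sqrt n * c := by
        rw [Real.sqrt_mul (by positivity), Real.sqrt_mul_self hc]

/-- Rounding error bound for dot products. -/
lemma round_dot_err (y x : Fin n → ℝ) :
    |(∑ j, (round (y j) : ℝ) * x j) - dot y x| ≤ Real.sqrt n / 2 * nrm x := by
  set e : Fin n → ℝ := fun j => (round (y j) : ℝ) - y j with he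
  have h1 : (∑ j, (round (y j) : ℝ) * x j) - dot y x = dot e x := by
    simp [dot, he, sub_mul, Finset.sum_sub_distrib]
  rw [h1]
  have h2 : nrm e ≤ Real.sqrt n * (1 / 2) := by
    apply nrm_le_of_abs_le (by norm_num)
    intro i
    have h3 : |e i| = |y i - round (y i)| := by rw [he, abs_sub_comm]
    rw [h3]
    exact abs_sub_round (y i)
  calc |dot e x| ≤ nrm e * nrm x := abs_dot_le e x
    _ ≤ (Real.sqrt n * (1 / 2)) * nrm x :=
        mul_le_mul_of_nonneg_right h2 (nrm_nonneg x)
    _ = Real.sqrt n / 2 * nrm x := by ring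

lemma exists_big_coord [NeZero n] (x : Fin n → ℝ) :
    ∃ i, nrm x ≤ Real.sqrt n * |x i| := by
  obtain ⟨i, -, hi⟩ := Finset.exists_max_image Finset.univ (fun j => |x j|)
    Finset.univ_nonempty
  refine ⟨i, ?_⟩
  have h1 : dot x x ≤ (n : ℝ) * (|x i| * |x i|) := by
    have : ∀ j ∈ Finset.univ, x j * x j ≤ |x i| * |x i| := by
      intro j hj
      calc x j * x j = |x j| * |x j| := (abs_mul_abs_self _).symm
        _ ≤ |x i| * |x i| := mul_le_mul (hi j hj) (hi j hj) (abs_nonneg _) (abs_nonneg _)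
    calc dot x x ≤ ∑ _j : Fin n, (|x i| * |x i|) := Finset.sum_le_sum this
      _ = (n : ℝ) * (|x i| * |x i|) := by simp [mul_comm]
  calc nrm x ≤ Real.sqrt ((n : ℝ) * (|x i| * |x i|)) := Real.sqrt_le_sqrt h1
    _ = Real.sqrt n * |x i| := by
        rw [Real.sqrt_mul (by positivity), Real.sqrt_mul_self (abs_nonneg _)]

end Aux

set_option maxHeartbeats 1600000 in
/-- For any ray ρ (spanned by a nonzero `d`) and any `0 < ε < 1` there are two
Boolean tropical Laurent polynomial functions that disagree somewhere on ρ but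
agree everywhere outside the open angular cone `U(ρ,ε)`. -/
theorem stmt9 {n : ℕ} (d : Fin n → ℝ) (hd : d ≠ 0)
    (ε : ℝ) (hε0 : 0 < ε) (hε1 : ε < 1) :
    ∃ f g : (Fin n → ℝ) → ℝ, IsTropFn n f ∧ IsTropFn n g ∧
      (∃ t : ℝ, 0 ≤ t ∧ f (t • d) ≠ g (t • d)) ∧
      (∀ x : Fin n → ℝ, ¬ (x ≠ 0 ∧ ε < dot d x / (nrm d * nrm x)) → f x = g x) := by
  classical
  -- dimension is positive
  have hn : 0 < n := by
    rcases Nat.eq_zero_or_pos n with h | h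
    · subst h; exact absurd (funext fun i => i.elim0) hd
    · exact h
  haveI : NeZero n := ⟨hn.ne'⟩
  -- basic data
  set D := nrm d with hDdef
  have hD : 0 < D := nrm_pos hd
  set u : Fin n → ℝ := fun j => D⁻¹ * d j with hudef
  have hdd : dot d d = D ^ 2 := dot_self_eq d
  have huu : dot u u = 1 := by
    have h1 : dot u u = D⁻¹ * D⁻¹ * dot d d := by
      rw [dot, dot, Finset.mul_sum]
      exact Finset.sum_congr rfl fun j _ => by rw [hudef]; ring
    rw [h1, hdd]
    field_simp
  have hud : dot u d = D := by
    have h1 : dot u d = D⁻¹ * dot d d := by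
      rw [dot, dot, Finset.mul_sum]
      exact Finset.sum_congr rfl fun j _ => by rw [hudef]; ring
    rw [h1, hdd]
    field_simp
  have huD : ∀ i, u i * D = d i := by
    intro i
    rw [hudef]
    field_simp
  -- constants
  set sn := Real.sqrt n with hsndef
  have hsn1 : 1 ≤ sn := by
    rw [hsndef, show (1 : ℝ) = Real.sqrt 1 by simp]
    exact Real.sqrt_le_sqrt (by exact_mod_cast hn)
  have hsn0 : 0 < sn := lt_of_lt_of_le one_pos hsn1
  set R : ℝ := sn + 1 with hRdef
  have hR0 : 0 < R := by positivity
  set ε' : ℝ := max ε (1 / 2) with hε'def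
  have hε'1 : ε' < 1 := max_lt hε1 (by norm_num)
  have hε'0 : 0 < ε' := lt_of_lt_of_le hε0 (le_max_left _ _)
  have hε'half : (1 : ℝ) / 2 ≤ ε' := le_max_right _ _
  set δ : ℝ := Real.sqrt (1 - ε' ^ 2) with hδdef
  have hδ0 : 0 < δ := Real.sqrt_pos.2 (by nlinarith)
  have hδsq : δ ^ 2 = 1 - ε' ^ 2 := Real.sq_sqrt (by nlinarith)
  set R' : ℝ := sn * (R * ε + sn) / δ + 1 with hR'def
  have hRεsn : 0 < R * ε + sn := by positivity
  have hkey : sn * (R * ε + sn) ≤ R' * δ := by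
    rw [hR'def]
    have : (sn * (R * ε + sn) / δ + 1) * δ = sn * (R * ε + sn) + δ := by
      field_simp
    rw [this]
    linarith
  have hR'0 : 0 < R' := by positivity
  have hεε' : ε ≤ ε' := le_max_left _ _
  clear_value sn R ε' δ R'
  -- the integer vectors
  set vv : Fin n → ℤ := fun j => round (R * u j) with hvvdef
  set q : Fin n → Fin n → ℝ := fun i j => (if j = i then 1 else 0) - u i * u j with hqdef
  set ww : Fin n → Fin n → ℤ := fun i j => round (R' * q i j) with hwwdef
  -- the finsets and the functions
  set S : Finset (Fin n → ℤ) :=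
    insert 0 (Finset.univ.image ww ∪ Finset.univ.image fun i => -ww i) with hSdef
  have hS : S.Nonempty := Finset.insert_nonempty _ _
  set f : (Fin n → ℝ) → ℝ := fun x => S.sup' hS fun w => ∑ j, (w j : ℝ) * x j with hfdef
  have hT : (insert vv S).Nonempty := Finset.insert_nonempty _ _
  set g : (Fin n → ℝ) → ℝ :=
    fun x => (insert vv S).sup' hT fun w => ∑ j, (w j : ℝ) * x j with hgdef
  have hg : ∀ x, g x = max (∑ j, (vv j : ℝ) * x j) (f x) := by
    intro x
    show (insert vv S).sup' hT (fun w => ∑ j, (w j : ℝ) * x j)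
      = max (∑ j, (vv j : ℝ) * x j) (f x)
    rw [Finset.sup'_insert hS]
  -- error estimates
  have hEv : ∀ x : Fin n → ℝ,
      |(∑ j, (vv j : ℝ) * x j) - R * dot u x| ≤ sn / 2 * nrm x := by
    intro x
    have h1 : dot (fun j => R * u j) x = R * dot u x := by
      rw [dot, dot, Finset.mul_sum]
      exact Finset.sum_congr rfl fun j _ => by ring
    have := round_dot_err (fun j => R * u j) x
    rw [h1, ← hsndef] at this
    exact this
  have hEw : ∀ (i : Fin n) (x : Fin n → ℝ),
      |(∑ j, (ww i j : ℝ) * x j) - R' * dot (q i) x| ≤ sn / 2 * nrm x := by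
    intro i x
    have h1 : dot (fun j => R' * q i j) x = R' * dot (q i) x := by
      rw [dot, dot, Finset.mul_sum]
      exact Finset.sum_congr rfl fun j _ => by ring
    have := round_dot_err (fun j => R' * q i j) x
    rw [h1, ← hsndef] at this
    exact this
  -- geometric facts about q
  have hqd : ∀ i, dot (q i) d = 0 := by
    intro i
    have h1 : dot (q i) d =
        (∑ j, (if j = i then 1 else 0) * d j) - u i * ∑ j, u j * d j := by
      rw [dot, Finset.mul_sum, ← Finset.sum_sub_distrib]
      exact Finset.sum_congr rfl fun j _ => by rw [hqdef]; ring
    rw [h1]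
    have h2 : (∑ j, (if j = i then (1 : ℝ) else 0) * d j) = d i := by
      simp [ite_mul]
    rw [h2, show (∑ j, u j * d j) = dot u d from rfl, hud, huD i, sub_self]
  have hqx : ∀ (i : Fin n) (x : Fin n → ℝ), dot (q i) x = x i - u i * dot u x := by
    intro i x
    have h1 : dot (q i) x =
        (∑ j, (if j = i then 1 else 0) * x j) - u i * ∑ j, u j * x j := by
      rw [dot, Finset.mul_sum, ← Finset.sum_sub_distrib]
      exact Finset.sum_congr rfl fun j _ => by rw [hqdef]; ring
    rw [h1]
    have h2 : (∑ j, (if j = i then (1 : ℝ) else 0) * x j) = x i := by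
      simp [ite_mul]
    rw [h2]
    rfl
  -- membership facts
  have hmem0 : (0 : Fin n → ℤ) ∈ S := Finset.mem_insert_self _ _
  have hmemw : ∀ i, ww i ∈ S := by
    intro i
    rw [hSdef]
    exact Finset.mem_insert_of_mem (Finset.mem_union_left _
      (Finset.mem_image.2 ⟨i, Finset.mem_univ i, rfl⟩))
  have hmemw' : ∀ i, -ww i ∈ S := by
    intro i
    rw [hSdef]
    exact Finset.mem_insert_of_mem (Finset.mem_union_right _
      (Finset.mem_image.2 ⟨i, Finset.mem_univ i, rfl⟩))
  have hf0 : ∀ x : Fin n → ℝ, (0 : ℝ) ≤ f x := by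
    intro x
    have h := Finset.le_sup' (fun w : Fin n → ℤ => ∑ j, (w j : ℝ) * x j) hmem0
    simp only [Pi.zero_apply, Int.cast_zero, zero_mul, Finset.sum_const_zero] at h
    exact h
  -- the main estimate: outside the cone, v·x ≤ f x
  have hmain : ∀ x : Fin n → ℝ, dot u x ≤ ε * nrm x →
      (∑ j, (vv j : ℝ) * x j) ≤ f x := by
    intro x hx
    have hnx : 0 ≤ nrm x := nrm_nonneg x
    have hv := abs_le.1 (hEv x)
    by_cases hA : R * dot u x + sn / 2 * nrm x ≤ 0
    · have : (∑ j, (vv j : ℝ) * x j) ≤ 0 := by linarith [hv.2]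
      linarith [hf0 x]
    · push_neg at hA
      -- |u·x| ≤ ε' ‖x‖
      have hup : dot u x ≤ ε' * nrm x :=
        le_trans hx (mul_le_mul_of_nonneg_right hεε' hnx)
      have hlow : -(ε' * nrm x) ≤ dot u x := by nlinarith
      have habs : |dot u x| ≤ ε' * nrm x := abs_le.2 ⟨hlow, hup⟩
      -- Pythagoras: the orthogonal part is large
      set c : ℝ := dot u x with hcdef
      set p : Fin n → ℝ := fun j => x j - u j * c with hpdef
      have hcp : ∀ j, p j = x j - u j * c := fun j => by rw [hpdef]
      have hpp : dot p p = dot x x - c ^ 2 := by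
        calc dot p p = ∑ j, (x j * x j - (2 * c) * (u j * x j) + c ^ 2 * (u j * u j)) :=
              Finset.sum_congr rfl fun j _ => by rw [hpdef]; ring
          _ = (∑ j, x j * x j) - (2 * c) * (∑ j, u j * x j)
                + c ^ 2 * (∑ j, u j * u j) := by
              rw [Finset.sum_add_distrib, Finset.sum_sub_distrib, Finset.mul_sum,
                Finset.mul_sum]
          _ = dot x x - (2 * c) * dot u x + c ^ 2 * dot u u := rfl
          _ = dot x x - c ^ 2 := by rw [huu, ← hcdef]; ring
      clear_value c p
      have hpbig : δ * nrm x ≤ nrm p := by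
        have h1 : (δ * nrm x) ^ 2 ≤ dot p p := by
          rw [hpp, dot_self_eq x]
          have hc2 : c ^ 2 ≤ (ε' * nrm x) ^ 2 := by
            have := sq_abs c
            nlinarith [habs, abs_nonneg c]
          nlinarith
        have h2 : nrm p = Real.sqrt (dot p p) := rfl
        rw [h2]
        exact Real.le_sqrt_of_sq_le h1
      obtain ⟨i, hi⟩ := exists_big_coord p
      have hpi : δ * nrm x ≤ sn * |p i| := le_trans hpbig (by rw [hsndef] at *; exact hi)
      -- fence bound
      have hw := abs_le.1 (hEw i x)
      rw [hqx i x, ← hcdef] at hw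
      have hqix : x i - u i * c = p i := by rw [hpdef]
      rw [hqix] at hw
      have hfence : R' * |p i| - sn / 2 * nrm x ≤ f x := by
        rcases abs_cases (p i) with ⟨he, -⟩ | ⟨he, -⟩
        · have hle : (∑ j, (ww i j : ℝ) * x j) ≤ f x :=
            Finset.le_sup' (fun w : Fin n → ℤ => ∑ j, (w j : ℝ) * x j) (hmemw i)
          rw [he]
          linarith [hw.1]
        · have hle : (∑ j, ((-ww i) j : ℝ) * x j) ≤ f x :=
            Finset.le_sup' (fun w : Fin n → ℤ => ∑ j, (w j : ℝ) * x j) (hmemw' i)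
          have hneg : (∑ j, ((-ww i) j : ℝ) * x j) = -(∑ j, (ww i j : ℝ) * x j) := by
            rw [← Finset.sum_neg_distrib]
            refine Finset.sum_congr rfl fun j _ => ?_
            simp only [Pi.neg_apply, Int.cast_neg]
            ring
          rw [hneg] at hle
          rw [he]
          linarith [hw.2]
      -- final chain
      have hvx : (∑ j, (vv j : ℝ) * x j) ≤ R * ε * nrm x + sn / 2 * nrm x := by
        have h6 : R * c ≤ R * (ε * nrm x) := mul_le_mul_of_nonneg_left hx hR0.le
        nlinarith [hv.2, h6]
      have hgoal : R * ε * nrm x + sn / 2 * nrm x ≤ R' * |p i| - sn / 2 * nrm x := by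
        have h1 : sn * (R * ε + sn) * nrm x ≤ R' * δ * nrm x :=
          mul_le_mul_of_nonneg_right hkey hnx
        have h2 : R' * (δ * nrm x) ≤ R' * (sn * |p i|) :=
          mul_le_mul_of_nonneg_left hpi hR'0.le
        have h3 : sn * ((R * ε + sn) * nrm x) ≤ sn * (R' * |p i|) := by
          nlinarith [h1, h2]
        have h4 : (R * ε + sn) * nrm x ≤ R' * |p i| :=
          le_of_mul_le_mul_left h3 hsn0
        have h5 : R * ε * nrm x + sn * nrm x ≤ R' * |p i| := by
          have : (R * ε + sn) * nrm x = R * ε * nrm x + sn * nrm x := by ring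
          linarith [this ▸ h4]
        linarith only [h5]
      linarith
  -- assembling everything
  refine ⟨f, g, ⟨S, hS, fun x => rfl⟩, ⟨insert vv S, hT, fun x => rfl⟩, ?_, ?_⟩
  · -- disagreement on the ray at t = 1
    refine ⟨1, zero_le_one, ?_⟩
    rw [one_smul]
    have hvd := abs_le.1 (hEv d)
    rw [hud, ← hDdef] at hvd
    have hvdlb : (sn / 2 + 1) * D ≤ ∑ j, (vv j : ℝ) * d j := by
      have : R * D - sn / 2 * D ≤ ∑ j, (vv j : ℝ) * d j := by linarith [hvd.1]
      rw [hRdef] at this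
      nlinarith
    have hflt : f d < ∑ j, (vv j : ℝ) * d j := by
      rw [hfdef]
      rw [Finset.sup'_lt_iff]
      intro w hw
      rw [hSdef] at hw
      simp only [Finset.mem_insert, Finset.mem_union, Finset.mem_image,
        Finset.mem_univ, true_and] at hw
      rcases hw with h0 | ⟨i, hi⟩ | ⟨i, hi⟩
      · subst h0
        simp only [Pi.zero_apply, Int.cast_zero, zero_mul, Finset.sum_const_zero]
        nlinarith
      · subst hi
        have hwd := abs_le.1 (hEw i d)
        rw [hqd i, mul_zero, sub_zero, ← hDdef] at hwd
        nlinarith [hwd.2]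
      · subst hi
        have hwd := abs_le.1 (hEw i d)
        rw [hqd i, mul_zero, sub_zero, ← hDdef] at hwd
        have hneg : (∑ j, ((-ww i) j : ℝ) * d j) = -(∑ j, (ww i j : ℝ) * d j) := by
          rw [← Finset.sum_neg_distrib]
          refine Finset.sum_congr rfl fun j _ => ?_
          simp only [Pi.neg_apply, Int.cast_neg]
          ring
        rw [hneg]
        nlinarith [hwd.1]
    have hgd : g d = ∑ j, (vv j : ℝ) * d j := by
      rw [hg d]
      exact max_eq_left hflt.le
    rw [hgd]
    exact ne_of_lt hflt
  · -- agreement outside the cone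
    intro x hx
    have hcond : dot u x ≤ ε * nrm x := by
      by_cases hx0 : x = 0
      · subst hx0
        have h1 : dot u (0 : Fin n → ℝ) = 0 := by simp [dot]
        have h2 : nrm (0 : Fin n → ℝ) = 0 := by simp [nrm, dot]
        rw [h1, h2, mul_zero]
      · push_neg at hx
        have hx' := hx hx0
        have hnx : 0 < nrm x := nrm_pos hx0
        have hdx : dot d x ≤ ε * (D * nrm x) := by
          rw [div_le_iff₀ (by positivity)] at hx'
          linarith [hx']
        have hux : dot u x = D⁻¹ * dot d x := by
          rw [dot, dot, Finset.mul_sum]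
          exact Finset.sum_congr rfl fun j _ => by rw [hudef]; ring
        rw [hux]
        calc D⁻¹ * dot d x ≤ D⁻¹ * (ε * (D * nrm x)) :=
              mul_le_mul_of_nonneg_left hdx (by positivity)
          _ = ε * nrm x := by field_simp
    rw [hg x]
    exact (max_eq_right (hmain x hcond)).symm
end

section
/- Let A, B be finite sets, F₁,…,F_n ∈ ℤ^A_0, and R the subsemiring of ℤ^A_pos ∪ {-∞} Laurent-generated by {F₁,…,F_n}. Suppose G₁,…,G_n ∈ ℤ^B_0 satisfy: for every b ∈ B there exist a ∈ A and nonnegative rational t with Gᵢ(b) = t·Fᵢ(a) for all i. Then there exists a unique semiring homomorphism ν : R → ℤ^B_pos ∪ {-∞} with ν(Fᵢ) = Gᵢ for all i. -/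
/-- Addition (pointwise max) in the semiring (ℤ ∪ {-∞})^A. -/
def tAdd {A : Type} (F G : A → WithBot ℤ) : A → WithBot ℤ := fun a => F a ⊔ G a

/-- Multiplication (pointwise truncated sum) in the semiring (ℤ ∪ {-∞})^A. -/
def tMul {A : Type} (F G : A → WithBot ℤ) : A → WithBot ℤ := fun a => F a + G a

/-- The additive identity: the constant -∞ function. -/
def tZero {A : Type} : A → WithBot ℤ := fun _ => ⊥

/-- The multiplicative identity: the constant 0 function. -/
def tOne {A : Type} : A → WithBot ℤ := fun _ => (0 : ℤ)

/-- Inclusion of ℤ-valued functions into (ℤ ∪ {-∞})^A. -/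
def ofInt {A : Type} (f : A → ℤ) : A → WithBot ℤ := fun a => (f a : WithBot ℤ)

/-- The subsemiring ℤ^A_pos ∪ {-∞}: either the constant -∞ or ℤ-valued with
nonnegative total sum. -/
def ZPos (A : Type) [Fintype A] : Set (A → WithBot ℤ) :=
  {F | F = tZero ∨ ∃ f : A → ℤ, F = ofInt f ∧ 0 ≤ ∑ a, f a}

/-- Membership in the subsemiring Laurent-generated by the units F₁, …, F_n
(each `F i : A → ℤ`, with inverse `-(F i)`). -/
inductive LGen {A : Type} {n : ℕ} (F : Fin n → A → ℤ) : (A → WithBot ℤ) → Prop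
  | gen (i : Fin n) : LGen F (ofInt (F i))
  | inv (i : Fin n) : LGen F (ofInt (-(F i)))
  | zero : LGen F tZero
  | one : LGen F tOne
  | add {P Q : A → WithBot ℤ} : LGen F P → LGen F Q → LGen F (tAdd P Q)
  | mul {P Q : A → WithBot ℤ} : LGen F P → LGen F Q → LGen F (tMul P Q)

/-- `ν` behaves as a semiring homomorphism on the subsemiring Laurent-generated
by the `F i`, with values in the subsemiring `ℤ^B_pos ∪ {-∞}`. -/
def IsHomOn {A B : Type} [Fintype B] {n : ℕ} (F : Fin n → A → ℤ)
    (ν : (A → WithBot ℤ) → (B → WithBot ℤ)) : Prop :=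
  ν tZero = tZero ∧ ν tOne = tOne ∧
  (∀ P Q, LGen F P → LGen F Q → ν (tAdd P Q) = tAdd (ν P) (ν Q)) ∧
  (∀ P Q, LGen F P → LGen F Q → ν (tMul P Q) = tMul (ν P) (ν Q)) ∧
  (∀ P, LGen F P → ν P ∈ ZPos B)

section Aux

variable {A : Type} {n : ℕ}

lemma tAdd_zero_left (Q : A → WithBot ℤ) : tAdd tZero Q = Q := by
  funext a; simp [tAdd, tZero]

lemma tAdd_zero_right (P : A → WithBot ℤ) : tAdd P tZero = P := by
  funext a; simp [tAdd, tZero]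

lemma tAdd_ofInt (p q : A → ℤ) :
    tAdd (ofInt p) (ofInt q) = ofInt (fun a => max (p a) (q a)) := by
  funext a; simp [tAdd, ofInt, WithBot.coe_sup]

lemma tMul_zero_left (Q : A → WithBot ℤ) : tMul tZero Q = tZero := by
  funext a; simp [tMul, tZero]

lemma tMul_zero_right (P : A → WithBot ℤ) : tMul P tZero = tZero := by
  funext a; simp [tMul, tZero]

lemma tMul_ofInt (p q : A → ℤ) :
    tMul (ofInt p) (ofInt q) = ofInt (fun a => p a + q a) := by
  funext a; simp [tMul, ofInt, ← WithBot.coe_add]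

/-- Structure lemma: every element of the Laurent-generated subsemiring is either
the zero element or an integer-valued function dominating some Laurent monomial. -/
lemma lgen_struct (F : Fin n → A → ℤ) {P : A → WithBot ℤ} (h : LGen F P) :
    P = tZero ∨ ∃ p : A → ℤ, P = ofInt p ∧ ∃ c : Fin n → ℤ,
      ∀ a, (∑ i, c i * F i a) ≤ p a := by
  induction h with
  | gen i =>
      right
      refine ⟨F i, rfl, fun j => if j = i then 1 else 0, fun a => ?_⟩
      simp [ite_mul]
  | inv i =>
      right
      refine ⟨-(F i), rfl, fun j => if j = i then -1 else 0, fun a => ?_⟩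
      simp [ite_mul]
  | zero => left; rfl
  | one =>
      right
      exact ⟨fun _ => 0, rfl, fun _ => 0, fun a => by simp⟩
  | add hP hQ ihP ihQ =>
      rcases ihP with hP0 | ⟨p, hp, c, hc⟩
      · rcases ihQ with hQ0 | ⟨q, hq, d, hd⟩
        · left; subst hP0; subst hQ0; rw [tAdd_zero_left]
        · right; subst hP0; subst hq; rw [tAdd_zero_left]; exact ⟨q, rfl, d, hd⟩
      · rcases ihQ with hQ0 | ⟨q, hq, d, hd⟩
        · right; subst hQ0; subst hp; rw [tAdd_zero_right]; exact ⟨p, rfl, c, hc⟩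
        · right; subst hp; subst hq
          exact ⟨fun a => max (p a) (q a), tAdd_ofInt p q, c,
            fun a => (hc a).trans (le_max_left _ _)⟩
  | mul hP hQ ihP ihQ =>
      rcases ihP with hP0 | ⟨p, hp, c, hc⟩
      · left; subst hP0; rw [tMul_zero_left]
      rcases ihQ with hQ0 | ⟨q, hq, d, hd⟩
      · left; subst hQ0; rw [tMul_zero_right]
      right; subst hp; subst hq
      refine ⟨fun a => p a + q a, tMul_ofInt p q, fun i => c i + d i, fun a => ?_⟩
      calc ∑ i, (c i + d i) * F i a = (∑ i, c i * F i a) + ∑ i, d i * F i a := by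
            rw [← Finset.sum_add_distrib]; congr 1; funext i; ring
        _ ≤ p a + q a := add_le_add (hc a) (hd a)

end Aux

/-- Existence and uniqueness of a semiring homomorphism with prescribed values
on the Laurent generators: if `G₁, …, G_n ∈ ℤ^B_0` satisfy the geometric
condition with respect to `F₁, …, F_n ∈ ℤ^A_0`, then there is a semiring
homomorphism `ν` from the subsemiring Laurent-generated by the `Fᵢ` to
ℤ^B_pos ∪ {-∞} with `ν(Fᵢ) = Gᵢ` for all `i`, and any two such homomorphisms
agree on the whole Laurent-generated subsemiring. -/
theorem stmt15 {A B : Type} [Fintype A] [Fintype B] {n : ℕ}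
    (F : Fin n → A → ℤ) (hF : ∀ i, ∑ a, F i a = 0)
    (G : Fin n → B → ℤ) (hG : ∀ i, ∑ b, G i b = 0)
    (hgeom : ∀ b : B, ∃ (a : A) (t : ℚ), 0 ≤ t ∧ ∀ i, (G i b : ℚ) = t * F i a) :
    (∃ ν : (A → WithBot ℤ) → (B → WithBot ℤ),
        IsHomOn F ν ∧ ∀ i, ν (ofInt (F i)) = ofInt (G i)) ∧
    (∀ ν ν' : (A → WithBot ℤ) → (B → WithBot ℤ),
        IsHomOn F ν → IsHomOn F ν' →
        (∀ i, ν (ofInt (F i)) = ofInt (G i)) →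
        (∀ i, ν' (ofInt (F i)) = ofInt (G i)) →
        ∀ P, LGen F P → ν P = ν' P) := by
  have main : ∃ ν : (A → WithBot ℤ) → (B → WithBot ℤ),
      IsHomOn F ν ∧ ∀ i, ν (ofInt (F i)) = ofInt (G i) := by
    choose a t ht hGt using hgeom
    set ν : (A → WithBot ℤ) → (B → WithBot ℤ) :=
      fun P b => WithBot.map (fun z : ℤ => ⌊t b * (z : ℚ)⌋) (P (a b)) with hνdef
    have hν : ∀ P b, ν P b = WithBot.map (fun z : ℤ => ⌊t b * (z : ℚ)⌋) (P (a b)) :=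
      fun P b => rfl
    have fl : ∀ (q : ℚ) (m : ℤ), q = (m : ℚ) → ⌊q⌋ = m := by
      intro q m h; rw [h]; exact Int.floor_intCast m
    -- key integrality lemma
    have key : ∀ P, LGen F P → ∀ b (z : ℤ), P (a b) = (z : WithBot ℤ) →
        ∃ m : ℤ, t b * (z : ℚ) = (m : ℚ) := by
      intro P hP
      induction hP with
      | gen i =>
          intro b z hz
          rw [show ofInt (F i) (a b) = ((F i (a b) : ℤ) : WithBot ℤ) from rfl,
            WithBot.coe_inj] at hz
          exact ⟨G i b, by rw [← hz, ← hGt b i]⟩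
      | inv i =>
          intro b z hz
          rw [show ofInt (-(F i)) (a b) = ((-(F i (a b)) : ℤ) : WithBot ℤ) from rfl,
            WithBot.coe_inj] at hz
          refine ⟨-(G i b), ?_⟩
          rw [← hz]
          push_cast
          rw [hGt b i]; ring
      | zero =>
          intro b z hz
          exact absurd hz (by simp [tZero])
      | one =>
          intro b z hz
          rw [show tOne (a b) = ((0 : ℤ) : WithBot ℤ) from rfl, WithBot.coe_inj] at hz
          exact ⟨0, by rw [← hz]; push_cast; ring⟩
      | @add P Q hP hQ ihP ihQ =>
          intro b z hz
          rw [show tAdd P Q (a b) = P (a b) ⊔ Q (a b) from rfl] at hz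
          rcases max_cases (P (a b)) (Q (a b)) with ⟨h1, _⟩ | ⟨h1, _⟩
          · exact ihP b z (h1.symm.trans hz)
          · exact ihQ b z (h1.symm.trans hz)
      | @mul P Q hP hQ ihP ihQ =>
          intro b z hz
          rw [show tMul P Q (a b) = P (a b) + Q (a b) from rfl, WithBot.add_eq_coe] at hz
          obtain ⟨p, q, hp, hq, hpq⟩ := hz
          obtain ⟨m, hm⟩ := ihP b p hp.symm
          obtain ⟨k, hk⟩ := ihQ b q hq.symm
          refine ⟨m + k, ?_⟩
          rw [← hpq]
          push_cast
          rw [mul_add, hm, hk]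
    have hzero : ν tZero = tZero := by
      funext b; rw [hν]; simp [tZero]
    have hone : ν tOne = tOne := by
      funext b; rw [hν]
      rw [show tOne (a b) = ((0 : ℤ) : WithBot ℤ) from rfl, WithBot.map_coe]
      show _ = ((0 : ℤ) : WithBot ℤ)
      rw [WithBot.coe_inj]
      exact fl _ 0 (by push_cast; ring)
    have hadd : ∀ P Q : A → WithBot ℤ, ν (tAdd P Q) = tAdd (ν P) (ν Q) := by
      intro P Q
      funext b
      rw [hν, show tAdd P Q (a b) = P (a b) ⊔ Q (a b) from rfl,
        show tAdd (ν P) (ν Q) b = ν P b ⊔ ν Q b from rfl, hν, hν]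
      have hmono : Monotone (fun z : ℤ => ⌊t b * (z : ℚ)⌋) := by
        intro x y hxy
        exact Int.floor_le_floor (mul_le_mul_of_nonneg_left (by exact_mod_cast hxy) (ht b))
      induction P (a b) using WithBot.recBotCoe with
      | bot => simp
      | coe z =>
        induction Q (a b) using WithBot.recBotCoe with
        | bot => simp
        | coe w =>
          rw [← WithBot.coe_sup, WithBot.map_coe, WithBot.map_coe, WithBot.map_coe,
            ← WithBot.coe_sup, WithBot.coe_inj]
          exact hmono.map_max
    have hmul : ∀ P Q, LGen F P → LGen F Q → ν (tMul P Q) = tMul (ν P) (ν Q) := by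
      intro P Q hP hQ
      funext b
      have hPk := key P hP b
      have hQk := key Q hQ b
      rw [hν, show tMul P Q (a b) = P (a b) + Q (a b) from rfl,
        show tMul (ν P) (ν Q) b = ν P b + ν Q b from rfl, hν, hν]
      revert hPk hQk
      induction P (a b) using WithBot.recBotCoe with
      | bot => intro _ _; simp
      | coe z =>
        induction Q (a b) using WithBot.recBotCoe with
        | bot => intro _ _; simp
        | coe w =>
          intro hPk hQk
          obtain ⟨m, hm⟩ := hPk z rfl
          obtain ⟨k, hk⟩ := hQk w rfl
          rw [← WithBot.coe_add, WithBot.map_coe, WithBot.map_coe, WithBot.map_coe,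
            ← WithBot.coe_add, WithBot.coe_inj]
          have h1 : ⌊t b * ((z + w : ℤ) : ℚ)⌋ = m + k := by
            refine fl _ _ ?_
            push_cast
            rw [mul_add, hm, hk]
          rw [h1, fl _ _ hm, fl _ _ hk]
    have hgen : ∀ i, ν (ofInt (F i)) = ofInt (G i) := by
      intro i
      funext b
      rw [hν, show ofInt (F i) (a b) = ((F i (a b) : ℤ) : WithBot ℤ) from rfl,
        WithBot.map_coe, show ofInt (G i) b = ((G i b : ℤ) : WithBot ℤ) from rfl,
        WithBot.coe_inj]
      exact fl _ _ (hGt b i).symm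
    have hzpos : ∀ P, LGen F P → ν P ∈ ZPos B := by
      intro P hP
      rcases lgen_struct F hP with h0 | ⟨p, hp, c, hc⟩
      · left; rw [h0, hzero]
      · right
        refine ⟨fun b => ⌊t b * (p (a b) : ℚ)⌋, ?_, ?_⟩
        · funext b
          rw [hν, hp, show ofInt p (a b) = ((p (a b) : ℤ) : WithBot ℤ) from rfl,
            WithBot.map_coe]
          rfl
        · have hb : ∀ b : B, (∑ i, c i * G i b) ≤ ⌊t b * (p (a b) : ℚ)⌋ := by
            intro b
            rw [Int.le_floor]
            push_cast
            have e1 : ∑ i, (c i : ℚ) * (G i b : ℚ) = t b * ∑ i, (c i : ℚ) * F i (a b) := by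
              rw [Finset.mul_sum]
              refine Finset.sum_congr rfl fun i _ => ?_
              rw [hGt b i]; ring
            rw [e1]
            refine mul_le_mul_of_nonneg_left ?_ (ht b)
            exact_mod_cast hc (a b)
          calc (0 : ℤ) = ∑ b : B, ∑ i, c i * G i b := by
                rw [Finset.sum_comm]
                simp only [← Finset.mul_sum]
                simp [hG]
            _ ≤ _ := Finset.sum_le_sum fun b _ => hb b
    exact ⟨ν, ⟨hzero, hone, fun P Q _ _ => hadd P Q, hmul, hzpos⟩, hgen⟩
  refine ⟨main, ?_⟩
  intro ν1 ν2 h1 h2 hg1 hg2 P hP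
  have hinv : ∀ μ : (A → WithBot ℤ) → (B → WithBot ℤ), IsHomOn F μ →
      (∀ i, μ (ofInt (F i)) = ofInt (G i)) →
      ∀ i, μ (ofInt (-(F i))) = ofInt (-(G i)) := by
    intro μ hμ hμg i
    obtain ⟨_, ho, _, hm, _⟩ := hμ
    have e1 : tMul (ofInt (F i)) (ofInt (-(F i))) = tOne := by
      rw [tMul_ofInt]; funext a; simp [ofInt, tOne]
    have h2' := hm _ _ (LGen.gen i) (LGen.inv i)
    rw [e1, ho, hμg i] at h2'
    funext b
    have h3 : ((0 : ℤ) : WithBot ℤ) = (G i b : WithBot ℤ) + μ (ofInt (-(F i))) b := by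
      have := congrFun h2' b
      exact this
    cases hx : μ (ofInt (-(F i))) b with
    | bot =>
        rw [hx, WithBot.add_bot] at h3
        exact absurd h3 (by simp)
    | coe w =>
        rw [hx, ← WithBot.coe_add, WithBot.coe_inj] at h3
        show ((w : ℤ) : WithBot ℤ) = ((-(G i b) : ℤ) : WithBot ℤ)
        rw [WithBot.coe_inj]
        omega
  induction hP with
  | gen i => rw [hg1 i, hg2 i]
  | inv i => rw [hinv ν1 h1 hg1 i, hinv ν2 h2 hg2 i]
  | zero => rw [h1.1, h2.1]
  | one => rw [h1.2.1, h2.2.1]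
  | add hPp hQq ih1 ih2 =>
      rw [h1.2.2.1 _ _ hPp hQq, h2.2.2.1 _ _ hPp hQq, ih1, ih2]
  | mul hPp hQq ih1 ih2 =>
      rw [h1.2.2.2.1 _ _ hPp hQq, h2.2.2.2.1 _ _ hPp hQq, ih1, ih2]
end
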